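/- Consider the regulator R^Λ(p) := exp(−‖p‖²/Λ²) on ℝ⁴. For every natural number k and every multi-index w ∈ ℕ⁴ there exists a constant c > 0 such that for all Λ > 0 and all p ∈ ℝ⁴, |∂_p^w ∂_Λ^k exp(−‖p‖²/Λ²)| ≤ c · max(‖p‖, Λ)^{−k−|w|} · exp(−‖p‖²/(2Λ²)), where ∂_p^w denotes the iterated partial derivative in p of multi-index w, ∂_Λ^k the k-th derivative in Λ, and |w| = w₁+w₂+w₃+w₄. -/

import Mathlib

abbrev E4 := EuclideanSpace ℝ (Fin 4)

/-- Partial derivative in coordinate direction `i`. -/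
noncomputable def pdR (i : Fin 4) (f : E4 → ℝ) : E4 → ℝ :=
  fun p => fderiv ℝ f p (EuclideanSpace.single i 1)

/-- Iterated partial derivative `∂^w` for a multi-index `w : ℕ⁴`. -/
noncomputable def pdMultiR (w : Fin 4 → ℕ) (f : E4 → ℝ) : E4 → ℝ :=
  (pdR 0)^[w 0] ((pdR 1)^[w 1] ((pdR 2)^[w 2] ((pdR 3)^[w 3] f)))

/-!
For `|a| - m = n`, the functions `(Λ, q) ↦ q^a Λ⁻ᵐ P(‖q‖²/Λ²) exp(-‖q‖²/Λ²)` with `P` a polynomial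
are homogeneous of degree `n`, and differentiating one of them in `Λ` or in a coordinate `q_j`
gives a linear combination of such functions of degree `n - 1`. Hence `∂_p^w ∂_Λ^k` of the
regulator lies in their span for degree `-k - |w|`. Each of them is `O(max(‖q‖, Λ)^n exp(-u/2))`
with `u = ‖q‖²/Λ²`: the monomial is at most `max^|a|`, `Λ⁻ᵐ ≤ max⁻ᵐ (1 + u)^m` because
`max(‖q‖, Λ) ≤ Λ (1 + u)`, and the remaining polynomial growth in `u` is absorbed by half of
`exp(-u)`.
-/

open Polynomial

noncomputable def gaussRadial (m : ℕ) (P : ℝ[X]) (Λ r : ℝ) : ℝ :=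
  Λ⁻¹ ^ m * P.eval (r / Λ ^ 2) * Real.exp (-r / Λ ^ 2)

noncomputable def scaleDerivPoly (m : ℕ) (P : ℝ[X]) : ℝ[X] :=
  2 * X * (P - derivative P) - C (m : ℝ) * P

theorem hasDerivAt_gaussRadial (m : ℕ) (P : ℝ[X]) (Λ r : ℝ) :
    HasDerivAt (gaussRadial m P Λ) (gaussRadial (m + 2) (derivative P - P) Λ r) r := by
  have hu : HasDerivAt (fun r : ℝ => r / Λ ^ 2) (1 / Λ ^ 2) r := (hasDerivAt_id r).div_const _
  have hv : HasDerivAt (fun r : ℝ => -r / Λ ^ 2) (-1 / Λ ^ 2) r := (hasDerivAt_id r).neg.div_const _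
  refine (((hasDerivAt_const r (Λ⁻¹ ^ m)).fun_mul ((P.hasDerivAt _).comp r hu)).fun_mul
    hv.exp).congr_deriv ?_
  simp only [gaussRadial, eval_sub, Function.comp]
  ring

theorem hasDerivAt_gaussRadial_scale (m : ℕ) (P : ℝ[X]) (r : ℝ) {Λ : ℝ} (hΛ : Λ ≠ 0) :
    HasDerivAt (fun L => gaussRadial m P L r) (gaussRadial (m + 1) (scaleDerivPoly m P) Λ r) Λ := by
  have hu : HasDerivAt (fun L : ℝ => r / L ^ 2) (-2 * r / Λ ^ 3) Λ := by
    refine ((hasDerivAt_const Λ r).fun_div (hasDerivAt_pow 2 Λ)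
      (pow_ne_zero 2 hΛ)).congr_deriv ?_
    field_simp
    ring
  have hv : HasDerivAt (fun L : ℝ => -r / L ^ 2) (2 * r / Λ ^ 3) Λ := by
    refine ((hasDerivAt_const Λ (-r)).fun_div (hasDerivAt_pow 2 Λ)
      (pow_ne_zero 2 hΛ)).congr_deriv ?_
    field_simp
    ring
  refine ((((hasDerivAt_inv hΛ).fun_pow m).fun_mul ((P.hasDerivAt _).comp Λ hu)).fun_mul
    hv.exp).congr_deriv ?_
  simp only [gaussRadial, scaleDerivPoly, eval_sub, eval_mul, eval_X, eval_C, eval_ofNat, inv_pow,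
    Function.comp]
  cases m with
  | zero => field_simp; ring
  | succ m => simp only [Nat.add_sub_cancel]; push_cast; field_simp; ring

theorem exists_iteratedDeriv_gaussRadial (m : ℕ) (P : ℝ[X]) (k : ℕ) :
    ∃ Q : ℝ[X], ∀ r Λ : ℝ, Λ ≠ 0 →
      iteratedDeriv k (fun L => gaussRadial m P L r) Λ = gaussRadial (m + k) Q Λ r := by
  induction k with
  | zero => exact ⟨P, fun r Λ _ => by simp⟩
  | succ k ih =>
    obtain ⟨Q, hQ⟩ := ih
    refine ⟨scaleDerivPoly (m + k) Q, fun r Λ hΛ => ?_⟩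
    have hnear : iteratedDeriv k (fun L => gaussRadial m P L r) =ᶠ[nhds Λ]
        fun L => gaussRadial (m + k) Q L r := by
      filter_upwards [isOpen_ne.mem_nhds hΛ] with L hL using hQ r L hL
    rw [iteratedDeriv_succ, hnear.deriv_eq, (hasDerivAt_gaussRadial_scale _ Q r hΛ).deriv,
      add_assoc]

theorem pow_le_mul_exp_half (k : ℕ) {u : ℝ} (hu : 0 ≤ u) :
    u ^ k ≤ 2 ^ k * k.factorial * Real.exp (u / 2) := by
  have h := Real.pow_div_factorial_le_exp (u / 2) (by positivity) k
  rw [div_le_iff₀ (by positivity), div_pow] at h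
  calc u ^ k = 2 ^ k * (u ^ k / 2 ^ k) := by field_simp
    _ ≤ 2 ^ k * (Real.exp (u / 2) * k.factorial) := by gcongr
    _ = _ := by ring

theorem exists_abs_eval_le_mul_exp_half (P : ℝ[X]) :
    ∃ C, ∀ u, 0 ≤ u → |P.eval u| ≤ C * Real.exp (u / 2) := by
  refine ⟨∑ k ∈ Finset.range (P.natDegree + 1), |P.coeff k| * (2 ^ k * k.factorial),
    fun u hu => ?_⟩
  rw [eval_eq_sum_range, Finset.sum_mul]
  refine (Finset.abs_sum_le_sum_abs _ _).trans (Finset.sum_le_sum fun k _ => ?_)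
  rw [abs_mul, abs_pow, abs_of_nonneg hu, mul_assoc]
  exact mul_le_mul_of_nonneg_left (pow_le_mul_exp_half k hu) (abs_nonneg _)

section Euclidean

variable {ι : Type*} [Fintype ι]

noncomputable def gaussMonomial (a : ι → ℕ) (m : ℕ) (P : ℝ[X]) (Λ : ℝ)
    (q : EuclideanSpace ℝ ι) : ℝ :=
  (∏ i, q i ^ a i) * gaussRadial m P Λ (‖q‖ ^ 2)

theorem hasFDerivAt_gaussMonomial [DecidableEq ι] (a : ι → ℕ) (m : ℕ) (P : ℝ[X]) (Λ : ℝ)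
    (q : EuclideanSpace ℝ ι) :
    HasFDerivAt (gaussMonomial a m P Λ)
      ((∏ i, q i ^ a i) • (gaussRadial (m + 2) (derivative P - P) Λ (‖q‖ ^ 2) •
          (2 • innerSL ℝ q)) +
        gaussRadial m P Λ (‖q‖ ^ 2) • ∑ i, (∏ l ∈ Finset.univ.erase i, q l ^ a l) •
          ((a i * q i ^ (a i - 1)) • EuclideanSpace.proj i)) q := by
  have hmono := HasFDerivAt.finsetProd (u := Finset.univ) fun i _ =>
    (hasDerivAt_pow (a i) (q i)).comp_hasFDerivAt q (EuclideanSpace.proj (𝕜 := ℝ) i).hasFDerivAt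
  have hrad := (hasDerivAt_gaussRadial m P Λ (‖q‖ ^ 2)).comp_hasFDerivAt q
    (hasStrictFDerivAt_norm_sq q).hasFDerivAt
  exact hmono.mul hrad

theorem prod_pow_update [DecidableEq ι] (x : ι → ℝ) (a : ι → ℕ) (j : ι) (b : ℕ) :
    ∏ i, x i ^ Function.update a j b i = x j ^ b * ∏ i ∈ Finset.univ.erase j, x i ^ a i := by
  rw [← Finset.mul_prod_erase _ _ (Finset.mem_univ j), Function.update_self]
  congr 1
  exact Finset.prod_congr rfl fun i hi => by rw [Function.update_of_ne (Finset.ne_of_mem_erase hi)]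

theorem fderiv_gaussMonomial_single [DecidableEq ι] (a : ι → ℕ) (m : ℕ) (P : ℝ[X]) (Λ : ℝ)
    (q : EuclideanSpace ℝ ι) (j : ι) :
    fderiv ℝ (gaussMonomial a m P Λ) q (EuclideanSpace.single j 1) =
      a j * gaussMonomial (Function.update a j (a j - 1)) m P Λ q +
        2 * gaussMonomial (Function.update a j (a j + 1)) (m + 2) (derivative P - P) Λ q := by
  rw [(hasFDerivAt_gaussMonomial a m P Λ q).fderiv]
  simp [gaussMonomial, prod_pow_update, ← Finset.mul_prod_erase _ (fun i => q i ^ a i)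
    (Finset.mem_univ j), EuclideanSpace.inner_single_right]
  ring

theorem differentiable_gaussMonomial (a : ι → ℕ) (m : ℕ) (P : ℝ[X]) (Λ : ℝ) :
    Differentiable ℝ (gaussMonomial a m P Λ) := fun q => by
  classical exact (hasFDerivAt_gaussMonomial a m P Λ q).differentiableAt

theorem sum_update_add_self [DecidableEq ι] (a : ι → ℕ) (j : ι) (b : ℕ) :
    ∑ i, Function.update a j b i + a j = ∑ i, a i + b := by
  rw [Finset.sum_update_of_mem (Finset.mem_univ j), Finset.sdiff_singleton_eq_erase,
    ← Finset.add_sum_erase _ a (Finset.mem_univ j)]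
  ring

variable (ι) in
noncomputable def gaussSpan (n : ℤ) : Submodule ℝ (ℝ → EuclideanSpace ℝ ι → ℝ) :=
  Submodule.span ℝ
    {F | ∃ (a : ι → ℕ) (m : ℕ) (P : ℝ[X]), ((∑ i, a i : ℕ) : ℤ) - m = n ∧ F = gaussMonomial a m P}

theorem differentiable_of_mem_gaussSpan {n : ℤ} {F : ℝ → EuclideanSpace ℝ ι → ℝ}
    (hF : F ∈ gaussSpan ι n) (Λ : ℝ) : Differentiable ℝ (F Λ) := by
  induction hF using Submodule.span_induction with
  | mem F hF =>
    obtain ⟨a, m, P, -, rfl⟩ := hF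
    exact differentiable_gaussMonomial a m P Λ
  | zero => exact differentiable_const 0
  | add F G _ _ hF hG => exact hF.add hG
  | smul r F _ hF => exact hF.const_smul r

theorem fderiv_single_mem_gaussSpan [DecidableEq ι] (j : ι) {n : ℤ}
    {F : ℝ → EuclideanSpace ℝ ι → ℝ} (hF : F ∈ gaussSpan ι n) :
    (fun Λ q => fderiv ℝ (F Λ) q (EuclideanSpace.single j 1)) ∈ gaussSpan ι (n - 1) := by
  induction hF using Submodule.span_induction with
  | mem F hF =>
    obtain ⟨a, m, P, rfl, rfl⟩ := hF
    have hlower : (a j : ℝ) • gaussMonomial (Function.update a j (a j - 1)) m P ∈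
        gaussSpan ι ((∑ i, a i : ℕ) - m - 1) := by
      rcases Nat.eq_zero_or_pos (a j) with h | h
      · simp [h]
      · have := sum_update_add_self a j (a j - 1)
        exact Submodule.smul_mem _ _ (Submodule.subset_span ⟨_, _, _, by omega, rfl⟩)
    have hraise : (2 : ℝ) • gaussMonomial (Function.update a j (a j + 1)) (m + 2)
        (derivative P - P) ∈ gaussSpan ι ((∑ i, a i : ℕ) - m - 1) := by
      have := sum_update_add_self a j (a j + 1)
      exact Submodule.smul_mem _ _ (Submodule.subset_span ⟨_, _, _, by omega, rfl⟩)
    convert add_mem hlower hraise using 1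
    ext Λ q
    exact fderiv_gaussMonomial_single a m P Λ q j
  | zero =>
    convert zero_mem (gaussSpan ι (n - 1)) using 1
    ext Λ q
    simp
  | add F G hFmem hGmem hF hG =>
    convert add_mem hF hG using 1
    ext Λ q
    simp [fderiv_add (differentiable_of_mem_gaussSpan hFmem Λ q)
      (differentiable_of_mem_gaussSpan hGmem Λ q)]
  | smul r F hFmem hF =>
    convert Submodule.smul_mem _ r hF using 1
    ext Λ q
    simp [fderiv_const_smul (differentiable_of_mem_gaussSpan hFmem Λ q)]

noncomputable def gaussWeight (n : ℤ) (Λ : ℝ) (q : EuclideanSpace ℝ ι) : ℝ :=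
  max ‖q‖ Λ ^ n * Real.exp (-‖q‖ ^ 2 / (2 * Λ ^ 2))

variable (ι) in
def gaussWeightBounded (n : ℤ) : Submodule ℝ (ℝ → EuclideanSpace ℝ ι → ℝ) where
  carrier := {F | ∃ C, ∀ Λ, 0 < Λ → ∀ q, |F Λ q| ≤ C * gaussWeight n Λ q}
  zero_mem' := ⟨0, by simp⟩
  add_mem' := by
    rintro F G ⟨C, hC⟩ ⟨D, hD⟩
    refine ⟨C + D, fun Λ hΛ q => ?_⟩
    calc |F Λ q + G Λ q| ≤ |F Λ q| + |G Λ q| := abs_add_le _ _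
      _ ≤ C * gaussWeight n Λ q + D * gaussWeight n Λ q := add_le_add (hC Λ hΛ q) (hD Λ hΛ q)
      _ = (C + D) * gaussWeight n Λ q := by ring
  smul_mem' := by
    rintro r F ⟨C, hC⟩
    refine ⟨|r| * C, fun Λ hΛ q => ?_⟩
    calc |r * F Λ q| = |r| * |F Λ q| := abs_mul _ _
      _ ≤ |r| * (C * gaussWeight n Λ q) := mul_le_mul_of_nonneg_left (hC Λ hΛ q) (abs_nonneg r)
      _ = |r| * C * gaussWeight n Λ q := by ring

theorem abs_prod_pow_le (q : EuclideanSpace ℝ ι) (a : ι → ℕ) {M : ℝ} (hM : ‖q‖ ≤ M) :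
    |∏ i, q i ^ a i| ≤ M ^ ∑ i, a i := by
  rw [Finset.abs_prod, ← Finset.prod_pow_eq_pow_sum]
  gcongr with i
  rw [abs_pow]
  gcongr
  exact (PiLp.norm_apply_le q i).trans hM

theorem max_le_mul_one_add_sq_div (x : ℝ) {Λ : ℝ} (hΛ : 0 < Λ) :
    max x Λ ≤ Λ * (1 + x ^ 2 / Λ ^ 2) := by
  have h : Λ * (1 + x ^ 2 / Λ ^ 2) = Λ + x ^ 2 / Λ := by field_simp
  rw [h, max_le_iff]
  constructor
  · rw [← sub_nonneg]
    have : Λ + x ^ 2 / Λ - x = ((x - Λ / 2) ^ 2 + 3 * Λ ^ 2 / 4) / Λ := by field_simp; ring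
    rw [this]; positivity
  · have : 0 ≤ x ^ 2 / Λ := by positivity
    linarith

theorem gaussMonomial_mem_gaussWeightBounded (a : ι → ℕ) (m : ℕ) (P : ℝ[X]) :
    gaussMonomial a m P ∈ gaussWeightBounded ι ((∑ i, a i : ℕ) - m) := by
  obtain ⟨C, hC⟩ := exists_abs_eval_le_mul_exp_half (P * (1 + X) ^ m)
  refine ⟨C, fun Λ hΛ q => ?_⟩
  set M := max ‖q‖ Λ
  set u := ‖q‖ ^ 2 / Λ ^ 2
  have hM : 0 < M := lt_max_of_lt_right hΛ
  have hu : 0 ≤ u := by positivity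
  have hmono := abs_prod_pow_le q a (le_max_left ‖q‖ Λ)
  have hscale : Λ⁻¹ ^ m ≤ (M ^ m)⁻¹ * (1 + u) ^ m := calc
    Λ⁻¹ ^ m = (M ^ m)⁻¹ * (M / Λ) ^ m := by rw [div_pow, inv_pow]; field_simp
    _ ≤ (M ^ m)⁻¹ * (1 + u) ^ m := by
      gcongr
      rw [div_le_iff₀ hΛ, mul_comm]
      exact max_le_mul_one_add_sq_div _ hΛ
  have hpoly : |P.eval u| * (1 + u) ^ m ≤ C * Real.exp (u / 2) := by
    simpa [abs_mul, abs_of_nonneg (by positivity : 0 ≤ 1 + u)] using hC u hu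
  calc |gaussMonomial a m P Λ q|
      = |∏ i, q i ^ a i| * Λ⁻¹ ^ m * |P.eval u| * Real.exp (-u) := by
        rw [gaussMonomial, gaussRadial, abs_mul, abs_mul, abs_mul, abs_pow, abs_inv,
          abs_of_pos hΛ, abs_of_pos (Real.exp_pos _), neg_div]
        ring
    _ ≤ M ^ (∑ i, a i) * ((M ^ m)⁻¹ * (1 + u) ^ m) * |P.eval u| * Real.exp (-u) := by gcongr
    _ = M ^ (∑ i, a i) * (M ^ m)⁻¹ * (|P.eval u| * (1 + u) ^ m) * Real.exp (-u) := by ring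
    _ ≤ M ^ (∑ i, a i) * (M ^ m)⁻¹ * (C * Real.exp (u / 2)) * Real.exp (-u) := by gcongr
    _ = C * gaussWeight ((∑ i, a i : ℕ) - m) Λ q := by
        have hexp : Real.exp (u / 2) * Real.exp (-u) = Real.exp (-‖q‖ ^ 2 / (2 * Λ ^ 2)) := by
          rw [← Real.exp_add, show u / 2 + -u = -‖q‖ ^ 2 / (2 * Λ ^ 2) by simp only [u]; ring]
        rw [gaussWeight, zpow_sub₀ hM.ne', zpow_natCast, zpow_natCast, ← hexp]
        ring

theorem gaussSpan_le_gaussWeightBounded (n : ℤ) : gaussSpan ι n ≤ gaussWeightBounded ι n :=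
  Submodule.span_le.2 <| by
    rintro _ ⟨a, m, P, rfl, rfl⟩
    exact gaussMonomial_mem_gaussWeightBounded a m P

end Euclidean

theorem gaussRadial_zero_one (Λ r : ℝ) : gaussRadial 0 1 Λ r = Real.exp (-r / Λ ^ 2) := by
  simp [gaussRadial]

theorem iterate_pdR_mem_gaussSpan (j : Fin 4) (N : ℕ) {n : ℤ} {F : ℝ → E4 → ℝ}
    (hF : F ∈ gaussSpan (Fin 4) n) : (fun Λ => (pdR j)^[N] (F Λ)) ∈ gaussSpan (Fin 4) (n - N) := by
  induction N generalizing n F with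
  | zero => simpa using hF
  | succ N ih =>
    rw [Nat.cast_succ, ← sub_sub, sub_right_comm]
    exact ih (fderiv_single_mem_gaussSpan j hF)

theorem pdMultiR_mem_gaussSpan (w : Fin 4 → ℕ) {n : ℤ} {F : ℝ → E4 → ℝ}
    (hF : F ∈ gaussSpan (Fin 4) n) :
    (fun Λ => pdMultiR w (F Λ)) ∈ gaussSpan (Fin 4) (n - ∑ i, (w i : ℤ)) := by
  rw [Fin.sum_univ_four, show n - (w 0 + w 1 + w 2 + w 3 : ℤ) = n - w 3 - w 2 - w 1 - w 0 by ring]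
  exact iterate_pdR_mem_gaussSpan 0 (w 0) <| iterate_pdR_mem_gaussSpan 1 (w 1) <|
    iterate_pdR_mem_gaussSpan 2 (w 2) <| iterate_pdR_mem_gaussSpan 3 (w 3) hF

theorem stmt11 (k : ℕ) (w : Fin 4 → ℕ) :
    ∃ c > 0, ∀ Λ : ℝ, 0 < Λ → ∀ p : E4,
      |pdMultiR w
          (fun q : E4 => iteratedDeriv k (fun L : ℝ => Real.exp (-‖q‖ ^ 2 / L ^ 2)) Λ) p| ≤
        c * max ‖p‖ Λ ^ (-(k : ℤ) - (∑ i, w i : ℤ)) * Real.exp (-‖p‖ ^ 2 / (2 * Λ ^ 2)) := by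
  obtain ⟨Q, hQ⟩ := exists_iteratedDeriv_gaussRadial 0 1 k
  have hmem : gaussMonomial (fun _ => 0) k Q ∈ gaussSpan (Fin 4) (-k) :=
    Submodule.subset_span ⟨_, _, _, by simp, rfl⟩
  obtain ⟨C, hC⟩ := gaussSpan_le_gaussWeightBounded _ (pdMultiR_mem_gaussSpan w hmem)
  refine ⟨|C| + 1, by positivity, fun Λ hΛ p => ?_⟩
  have hslice : (fun q : E4 => iteratedDeriv k (fun L => Real.exp (-‖q‖ ^ 2 / L ^ 2)) Λ) =
      gaussMonomial (fun _ => 0) k Q Λ := by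
    ext q
    simpa [gaussMonomial, gaussRadial_zero_one] using hQ (‖q‖ ^ 2) Λ hΛ.ne'
  have hweight : 0 ≤ gaussWeight (-(k : ℤ) - ∑ i, (w i : ℤ)) Λ p := by
    unfold gaussWeight; positivity
  rw [hslice]
  calc _ ≤ C * gaussWeight (-(k : ℤ) - ∑ i, (w i : ℤ)) Λ p := hC Λ hΛ p
    _ ≤ (|C| + 1) * gaussWeight (-(k : ℤ) - ∑ i, (w i : ℤ)) Λ p := by
      gcongr; linarith [le_abs_self C]
    _ = _ := by rw [gaussWeight, mul_assoc]
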